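/- Let G, H be graphs with vertices u ∈ V(G), v ∈ V(H). If G∖u ⪰ H∖v and H∖[v] ⪰ G∖[u], then G ⪰ H. -/

import Mathlib

open Finset

open scoped Classical in
/-- The independence polynomial of `G` evaluated at `x`:
`I(G,x)` is the sum of `x^|s|` over all independent sets `s` of `G`. -/
noncomputable def indepPoly {V : Type*} [Fintype V] (G : SimpleGraph V) (x : ℝ) : ℝ :=
  ∑ s ∈ (Finset.univ : Finset (Finset V)).filter
      (fun s => ∀ u ∈ s, ∀ v ∈ s, ¬ G.Adj u v), x ^ s.card

/-- `ξ` is the largest real root of the independence polynomial of `G`. -/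
noncomputable def IsLargestRoot {V : Type*} [Fintype V] (G : SimpleGraph V) (ξ : ℝ) : Prop :=
  indepPoly G ξ = 0 ∧ ∀ y : ℝ, indepPoly G y = 0 → y ≤ ξ

section Aux
open scoped Classical

variable {V : Type*} [Fintype V]

noncomputable def pset (G : SimpleGraph V) (s : Set V) (x : ℝ) : ℝ :=
  ∑ t ∈ (Finset.univ : Finset (Finset V)).filter
      (fun t : Finset V => (↑t : Set V) ⊆ s ∧ ∀ a ∈ t, ∀ b ∈ t, ¬ G.Adj a b), x ^ t.card

lemma pset_continuous (G : SimpleGraph V) (s : Set V) : Continuous (fun x => pset G s x) := by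
  unfold pset
  exact continuous_finset_sum _ (fun t _ => continuous_pow _)

lemma pset_zero (G : SimpleGraph V) (s : Set V) : pset G s 0 = 1 := by
  unfold pset
  rw [Finset.sum_eq_single (∅ : Finset V)]
  · simp
  · intro t ht hne
    rw [zero_pow (by simpa [Finset.card_eq_zero] using hne)]
  · intro h
    exact absurd (by simp) h

lemma pset_pos_of_nonneg (G : SimpleGraph V) (s : Set V) {x : ℝ} (hx : 0 ≤ x) :
    0 < pset G s x := by
  unfold pset
  apply Finset.sum_pos' (fun t _ => pow_nonneg hx _)
  exact ⟨∅, by simp, by simp⟩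

lemma indepPoly_eq_pset (G : SimpleGraph V) (x : ℝ) : indepPoly G x = pset G Set.univ x := by
  unfold indepPoly pset
  apply Finset.sum_congr _ (fun _ _ => rfl)
  apply Finset.filter_congr
  intro t _
  simp

lemma indepPoly_induce (G : SimpleGraph V) (s : Set V) [Fintype ↥s] (x : ℝ) :
    indepPoly (G.induce s) x = pset G s x := by
  unfold indepPoly pset
  refine Finset.sum_nbij' (fun t => t.map (Function.Embedding.subtype _))
    (fun t => t.subtype (· ∈ s)) ?_ ?_ ?_ ?_ ?_
  · intro t ht
    simp only [Finset.mem_filter, Finset.mem_univ, true_and] at ht ⊢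
    constructor
    · intro a ha
      simp only [Finset.coe_map, Set.mem_image] at ha
      obtain ⟨b, _, rfl⟩ := ha
      exact b.2
    · intro a ha b hb hadj
      simp only [Finset.mem_map, Function.Embedding.coe_subtype] at ha hb
      obtain ⟨a', ha', rfl⟩ := ha
      obtain ⟨b', hb', rfl⟩ := hb
      exact ht a' ha' b' hb' (by simpa using hadj)
  · intro t ht
    simp only [Finset.mem_filter, Finset.mem_univ, true_and] at ht ⊢
    intro a ha b hb hadj
    rw [Finset.mem_subtype] at ha hb
    exact ht.2 a ha b hb (by simpa using hadj)
  · intro t ht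
    ext a
    simp [Finset.mem_subtype, Finset.mem_map, Function.Embedding.coe_subtype]
  · intro t ht
    simp only [Finset.mem_filter, Finset.mem_univ, true_and] at ht
    show Finset.map _ (Finset.subtype _ t) = t
    rw [Finset.subtype_map, Finset.filter_true_of_mem]
    intro a ha
    exact ht.1 ha
  · intro t ht
    simp [Finset.card_map]

lemma pset_rec (G : SimpleGraph V) {s : Set V} {u : V} (hu : u ∈ s) (x : ℝ) :
    pset G s x = pset G (s \ {u}) x + x * pset G (s \ ({u} ∪ G.neighborSet u)) x := by
  unfold pset
  rw [← Finset.sum_filter_add_sum_filter_not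
    ((Finset.univ : Finset (Finset V)).filter
      (fun t : Finset V => (↑t : Set V) ⊆ s ∧ ∀ a ∈ t, ∀ b ∈ t, ¬ G.Adj a b))
    (fun t => u ∉ t)]
  congr 1
  · apply Finset.sum_congr _ (fun _ _ => rfl)
    rw [Finset.filter_filter]
    apply Finset.filter_congr
    intro t _
    constructor
    · rintro ⟨⟨hsub, hind⟩, hnu⟩
      refine ⟨fun a ha => ⟨hsub ha, by simp; rintro rfl; exact hnu ha⟩, hind⟩
    · rintro ⟨hsub, hind⟩
      refine ⟨⟨fun a ha => (hsub ha).1, hind⟩, fun hut => (hsub hut).2 rfl⟩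
  · rw [Finset.mul_sum]
    refine Finset.sum_nbij' (fun t => t.erase u) (fun t => insert u t) ?_ ?_ ?_ ?_ ?_
    · intro t ht
      simp only [Finset.mem_filter, Finset.mem_univ, true_and, not_not] at ht ⊢
      obtain ⟨⟨hsub, hind⟩, hut⟩ := ht
      refine ⟨?_, fun a ha b hb => hind a (Finset.mem_of_mem_erase ha) b (Finset.mem_of_mem_erase hb)⟩
      intro a ha
      have ha' : a ∈ t := Finset.mem_of_mem_erase (by exact_mod_cast ha)
      have hne : a ≠ u := Finset.ne_of_mem_erase (by exact_mod_cast ha)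
      refine ⟨hsub ha', ?_⟩
      simp only [Set.mem_union, Set.mem_singleton_iff, SimpleGraph.mem_neighborSet]
      rintro (rfl | hadj)
      · exact hne rfl
      · exact hind u hut a ha' hadj
    · intro t ht
      simp only [Finset.mem_filter, Finset.mem_univ, true_and, not_not] at ht ⊢
      obtain ⟨hsub, hind⟩ := ht
      have hunotmem : u ∉ t := fun h => (hsub h).2 (Or.inl rfl)
      refine ⟨⟨?_, ?_⟩, Finset.mem_insert_self u t⟩
      · intro a ha
        rcases Finset.mem_insert.mp (by exact_mod_cast ha) with rfl | h
        · exact hu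
        · exact (hsub h).1
      · intro a ha b hb
        rcases Finset.mem_insert.mp ha with rfl | ha' <;>
          rcases Finset.mem_insert.mp hb with rfl | hb'
        · exact fun h => G.irrefl h
        · exact fun h => (hsub hb').2 (Or.inr h)
        · exact fun h => (hsub ha').2 (Or.inr (G.adj_symm h))
        · exact hind a ha' b hb'
    · intro t ht
      simp only [Finset.mem_filter, not_not] at ht
      exact Finset.insert_erase ht.2
    · intro t ht
      simp only [Finset.mem_filter, Finset.mem_univ, true_and] at ht
      exact Finset.erase_insert (fun h => (ht.1 h).2 (Or.inl rfl))
    · intro t ht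
      simp only [Finset.mem_filter, not_not] at ht
      rw [← Finset.card_erase_add_one ht.2, pow_succ]
      ring

lemma pos_on_Ioc {f : ℝ → ℝ} (hf : Continuous f) (h0 : f 0 = 1) {a : ℝ}
    (h : ∀ y ∈ Set.Ioc a 0, f y ≠ 0) : ∀ y ∈ Set.Ioc a 0, 0 < f y := by
  intro y hy
  rcases lt_trichotomy (f y) 0 with hneg | hzero | hpos
  · exfalso
    have : (0 : ℝ) ∈ Set.Icc (f y) (f 0) := ⟨hneg.le, by rw [h0]; norm_num⟩
    obtain ⟨c, hc, hfc⟩ := intermediate_value_Icc hy.2 hf.continuousOn this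
    exact h c ⟨lt_of_lt_of_le hy.1 hc.1, hc.2⟩ hfc
  · exact absurd hzero (h y hy)
  · exact hpos

lemma pset_pos_subset (G : SimpleGraph V) :
    ∀ n : ℕ, ∀ s t : Set V, t ⊆ s → s.ncard ≤ n → ∀ a : ℝ,
      (∀ y ∈ Set.Ioc a 0, 0 < pset G s y) → ∀ y ∈ Set.Ioc a 0, 0 < pset G t y := by
  intro n
  induction n with
  | zero =>
    intro s t hts hcard a hpos
    have hs : s = ∅ := by
      have := Set.ncard_eq_zero (Set.toFinite s) |>.mp (Nat.le_zero.mp hcard)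
      exact this
    subst hs
    rw [Set.subset_empty_iff.mp hts]
    exact hpos
  | succ n ih =>
    intro s t hts hcard a hpos
    by_cases hts' : t = s
    · subst hts'; exact hpos
    · obtain ⟨u, hus, hut⟩ : ∃ u, u ∈ s ∧ u ∉ t := by
        by_contra hc
        push_neg at hc
        exact hts' (Set.Subset.antisymm hts (fun w hw => by
          by_contra hwt
          exact hwt (hc w hw)))
      have hcard2' : (s \ {u}).ncard ≤ n := by
        have := Set.ncard_diff_singleton_lt_of_mem hus (Set.toFinite s)
        omega
      -- key claim : pset G (s \ {u}) is positive on Ioc a 0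
      have hclaim : ∀ y ∈ Set.Ioc a 0, 0 < pset G (s \ {u}) y := by
        by_contra hcon
        push_neg at hcon
        obtain ⟨y0, hy0, hy0le⟩ := hcon
        set f : ℝ → ℝ := fun y => pset G (s \ {u}) y with hfdef
        have hfc : Continuous f := pset_continuous G _
        have hf0 : f 0 = 1 := pset_zero G _
        -- find a zero in [y0, 0]
        have h0mem : (0 : ℝ) ∈ Set.Icc (f y0) (f 0) := ⟨hy0le, by rw [hf0]; norm_num⟩
        obtain ⟨c, hc, hfc0⟩ := intermediate_value_Icc hy0.2 hfc.continuousOn h0mem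
        set Z : Set ℝ := Set.Icc y0 0 ∩ f ⁻¹' {0} with hZdef
        have hZclosed : IsClosed Z := isClosed_Icc.inter (isClosed_singleton.preimage hfc)
        have hZne : Z.Nonempty := ⟨c, hc, hfc0⟩
        have hZbdd : BddAbove Z := BddAbove.mono Set.inter_subset_left bddAbove_Icc
        set y1 := sSup Z with hy1def
        have hy1Z : y1 ∈ Z := hZclosed.csSup_mem hZne hZbdd
        have hy1zero : f y1 = 0 := hy1Z.2
        have hy1Icc : y1 ∈ Set.Icc y0 0 := hy1Z.1
        have hy1lt0 : y1 < 0 := lt_of_le_of_ne hy1Icc.2 (by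
          intro h; rw [h] at hy1zero; rw [hf0] at hy1zero; norm_num at hy1zero)
        -- f positive on Ioc y1 0
        have hfpos : ∀ y ∈ Set.Ioc y1 0, 0 < f y := by
          apply pos_on_Ioc hfc hf0
          intro y hy hfy
          have hyZ : y ∈ Z := ⟨⟨le_trans hy1Icc.1 hy.1.le, hy.2⟩, hfy⟩
          exact absurd (le_csSup hZbdd hyZ) (not_le.mpr hy.1)
        -- apply IH to delete closed neighborhood of u from s \ {u}
        have hsub2 : s \ ({u} ∪ G.neighborSet u) ⊆ s \ {u} := by
          intro w hw
          exact ⟨hw.1, fun h => hw.2 (Or.inl h)⟩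
        have hpos2 := ih (s \ {u}) (s \ ({u} ∪ G.neighborSet u)) hsub2 hcard2' y1 hfpos
        -- continuity: pset at closed nbhd ≥ 0 at y1
        have hge : 0 ≤ pset G (s \ ({u} ∪ G.neighborSet u)) y1 := by
          by_contra hneg
          push_neg at hneg
          have h0mem' : (0 : ℝ) ∈ Set.Ioc (pset G (s \ ({u} ∪ G.neighborSet u)) y1)
              (pset G (s \ ({u} ∪ G.neighborSet u)) 0) := ⟨hneg, by rw [pset_zero]; norm_num⟩
          obtain ⟨c', hc', hfc'⟩ := intermediate_value_Ioc hy1lt0.le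
            (pset_continuous G _).continuousOn h0mem'
          exact absurd hfc' (ne_of_gt (hpos2 c' hc'))
        -- recursion gives contradiction
        have hrec := pset_rec G hus y1
        have hy1mem : y1 ∈ Set.Ioc a 0 := ⟨lt_of_lt_of_le hy0.1 hy1Icc.1, hy1Icc.2⟩
        have hP := hpos y1 hy1mem
        rw [hrec, show pset G (s \ {u}) y1 = 0 from hy1zero] at hP
        have hle : y1 * pset G (s \ ({u} ∪ G.neighborSet u)) y1 ≤ 0 :=
          mul_nonpos_of_nonpos_of_nonneg hy1lt0.le hge
        linarith
      exact ih (s \ {u}) t (fun w hw => ⟨hts hw, fun h => hut (h ▸ hw)⟩) hcard2' a hclaim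

lemma indepPoly_continuous (K : SimpleGraph V) : Continuous (fun x => indepPoly K x) := by
  have : (fun x => indepPoly K x) = fun x => pset K Set.univ x := by
    funext x; exact indepPoly_eq_pset K x
  rw [this]; exact pset_continuous K _

lemma indepPoly_zero (K : SimpleGraph V) : indepPoly K 0 = 1 := by
  rw [indepPoly_eq_pset]; exact pset_zero K _

lemma largestRoot_neg {K : SimpleGraph V} {ξ : ℝ} (h : IsLargestRoot K ξ) : ξ < 0 := by
  by_contra hc
  push_neg at hc
  have := pset_pos_of_nonneg K Set.univ hc
  rw [← indepPoly_eq_pset] at this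
  rw [h.1] at this
  exact lt_irrefl 0 this

lemma pos_Ioc_of_largestRoot {K : SimpleGraph V} {ξ : ℝ} (h : IsLargestRoot K ξ) :
    ∀ y ∈ Set.Ioc ξ 0, 0 < indepPoly K y := by
  apply pos_on_Ioc (indepPoly_continuous K) (indepPoly_zero K)
  intro y hy hzero
  exact absurd (h.2 y hzero) (not_le.mpr hy.1)

end Aux

open scoped Classical in
/-- If `G∖u ⪰ H∖v` and `H∖[v] ⪰ G∖[u]`, then `G ⪰ H`. -/
theorem indepOrder_of_vertex_parts {V W : Type*} [Fintype V] [Fintype W]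
    (G : SimpleGraph V) (H : SimpleGraph W) (u : V) (v : W)
    (ξG ξGu ξHv : ℝ) (hG : IsLargestRoot G ξG)
    (hGu : IsLargestRoot (G.induce {w | w ≠ u}) ξGu)
    (hHv : IsLargestRoot (H.induce (({v} ∪ H.neighborSet v)ᶜ)) ξHv)
    (h1 : ∀ x ∈ Set.Icc ξGu (0 : ℝ),
      indepPoly (G.induce {w | w ≠ u}) x ≤ indepPoly (H.induce {w | w ≠ v}) x)
    (h2 : ∀ x ∈ Set.Icc ξHv (0 : ℝ),
      indepPoly (H.induce (({v} ∪ H.neighborSet v)ᶜ)) x ≤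
        indepPoly (G.induce (({u} ∪ G.neighborSet u)ᶜ)) x) :
    ∀ x ∈ Set.Icc ξG (0 : ℝ), indepPoly G x ≤ indepPoly H x := by
  have e1 : (Set.univ \ {u} : Set V) = {w | w ≠ u} := by ext w; simp
  have e2 : (Set.univ \ ({u} ∪ G.neighborSet u) : Set V) = ({u} ∪ G.neighborSet u)ᶜ :=
    (Set.compl_eq_univ_diff _).symm
  have e1' : (Set.univ \ {v} : Set W) = {w | w ≠ v} := by ext w; simp
  have e2' : (Set.univ \ ({v} ∪ H.neighborSet v) : Set W) = ({v} ∪ H.neighborSet v)ᶜ :=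
    (Set.compl_eq_univ_diff _).symm
  -- positivity of G and its subsets on Ioc ξG 0
  have hposG : ∀ y ∈ Set.Ioc ξG 0, 0 < pset G Set.univ y := by
    intro y hy
    rw [← indepPoly_eq_pset]
    exact pos_Ioc_of_largestRoot hG y hy
  have hposGu : ∀ y ∈ Set.Ioc ξG 0, 0 < pset G {w | w ≠ u} y :=
    pset_pos_subset G (Set.univ : Set V).ncard Set.univ {w | w ≠ u}
      (Set.subset_univ _) le_rfl ξG hposG
  -- ξGu ≤ ξG
  have hGuLe : ξGu ≤ ξG := by
    by_contra hc
    push_neg at hc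
    have hmem : ξGu ∈ Set.Ioc ξG 0 := ⟨hc, (largestRoot_neg hGu).le⟩
    have h0 := hGu.1
    rw [indepPoly_induce] at h0
    exact absurd h0 (ne_of_gt (hposGu ξGu hmem))
  -- positivity of H∖v on Ioc ξG 0 via h1
  have hposHv : ∀ y ∈ Set.Ioc ξG 0, 0 < pset H {w | w ≠ v} y := by
    intro y hy
    have h1y := h1 y ⟨le_trans hGuLe hy.1.le, hy.2⟩
    rw [indepPoly_induce, indepPoly_induce] at h1y
    exact lt_of_lt_of_le (hposGu y hy) h1y
  -- positivity of H∖[v] on Ioc ξG 0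
  have hsubHv : (({v} ∪ H.neighborSet v)ᶜ : Set W) ⊆ {w | w ≠ v} := by
    intro w hw
    intro hwv
    exact hw (Or.inl (by rw [hwv]; rfl))
  have hposHcv : ∀ y ∈ Set.Ioc ξG 0, 0 < pset H (({v} ∪ H.neighborSet v)ᶜ) y :=
    pset_pos_subset H ({w | w ≠ v} : Set W).ncard {w | w ≠ v} _ hsubHv le_rfl ξG hposHv
  -- ξHv ≤ ξG
  have hHvLe : ξHv ≤ ξG := by
    by_contra hc
    push_neg at hc
    have hmem : ξHv ∈ Set.Ioc ξG 0 := ⟨hc, (largestRoot_neg hHv).le⟩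
    have h0 := hHv.1
    rw [indepPoly_induce] at h0
    exact absurd h0 (ne_of_gt (hposHcv ξHv hmem))
  -- main computation
  intro x hx
  have h1x := h1 x ⟨le_trans hGuLe hx.1, hx.2⟩
  have h2x := h2 x ⟨le_trans hHvLe hx.1, hx.2⟩
  rw [indepPoly_induce, indepPoly_induce] at h1x h2x
  rw [indepPoly_eq_pset, indepPoly_eq_pset, pset_rec G (Set.mem_univ u) x,
    pset_rec H (Set.mem_univ v) x, e1, e2, e1', e2']
  exact add_le_add h1x (mul_le_mul_of_nonpos_left h2x hx.2)
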